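/- arXiv:2104.08047 — 3 statements merged into one kernel-verified Lean document; each statement's English description precedes it below -/
import Mathlib

section
/- Fix g ∈ ℂ^n \ {0}, positive semidefinite Hermitian A₁,…,A_K, and Hermitian positive definite F. The interference function I(η) = 1 / (g^H (Σ_i η_i A_i + F)^{-1} g) satisfies the scalability property: for every t > 1 and η ∈ ℝ_{≥0}^K, I(t·η) < t·I(η). -/
/-!
Write `M = Σᵢ ηᵢ Aᵢ + F` and `N = Σᵢ tηᵢ Aᵢ + F`. Then `t • M = N + (t - 1) • F` with `(t - 1) • F`
positive definite, so the claim `I(tη) < t I(η)` is `gᴴ (N + D)⁻¹ g < gᴴ N⁻¹ g` for `D ≻ 0`: the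
quadratic form of the inverse is strictly antitone. With `u = N⁻¹ x` and `y = (N + D)⁻¹ x`, the gap
`xᴴ u - xᴴ y` equals `(u - y)ᴴ N (u - y) + yᴴ D y`, which is positive because `y ≠ 0`.
-/

open Matrix ComplexOrder

lemma Matrix.IsHermitian.dotProduct_sub_dotProduct_eq {m R : Type*} [Fintype m] [CommRing R]
    [StarRing R] {N D : Matrix m m R} (hN : N.IsHermitian) {x u y : m → R}
    (hu : N *ᵥ u = x) (hy : (N + D) *ᵥ y = x) :
    star x ⬝ᵥ u - star x ⬝ᵥ y = star (u - y) ⬝ᵥ N *ᵥ (u - y) + star y ⬝ᵥ D *ᵥ y := by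
  have hNuy : N *ᵥ (u - y) = D *ᵥ y := by
    rw [mulVec_sub, hu, ← hy, add_mulVec]; abel
  have hself (v w : m → R) : star (N *ᵥ v) ⬝ᵥ w = star v ⬝ᵥ N *ᵥ w := by
    rw [star_mulVec, hN.eq, dotProduct_mulVec]
  have hux : star u ⬝ᵥ x = star x ⬝ᵥ u := by rw [← hu, ← hself]
  have huy : star u ⬝ᵥ N *ᵥ y = star x ⬝ᵥ y := by rw [← hself, hu]
  rw [hNuy, star_sub, sub_dotProduct, ← hNuy, mulVec_sub, dotProduct_sub, hu, hux, huy]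
  ring

lemma Matrix.PosDef.dotProduct_inv_add_mulVec_lt {m K : Type*} [Fintype m] [DecidableEq m]
    [Field K] [PartialOrder K] [StarRing K] [IsOrderedAddMonoid K] {N D : Matrix m m K}
    (hN : N.PosDef) (hD : D.PosDef) {x : m → K} (hx : x ≠ 0) :
    star x ⬝ᵥ (N + D)⁻¹ *ᵥ x < star x ⬝ᵥ N⁻¹ *ᵥ x := by
  have hND : (N + D).PosDef := hN.add hD
  have hu : N *ᵥ (N⁻¹ *ᵥ x) = x := by
    rw [mulVec_mulVec, mul_nonsing_inv _ ((isUnit_iff_isUnit_det N).mp hN.isUnit), one_mulVec]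
  have hy : (N + D) *ᵥ ((N + D)⁻¹ *ᵥ x) = x := by
    rw [mulVec_mulVec, mul_nonsing_inv _ ((isUnit_iff_isUnit_det _).mp hND.isUnit), one_mulVec]
  have hy0 : (N + D)⁻¹ *ᵥ x ≠ 0 := fun h => hx (by rw [← hy, h, mulVec_zero])
  rw [← sub_pos, hN.isHermitian.dotProduct_sub_dotProduct_eq hu hy]
  exact add_pos_of_nonneg_of_pos (hN.posSemidef.dotProduct_mulVec_nonneg _)
    (hD.dotProduct_mulVec_pos hy0)

lemma Matrix.posDef_sum_smul_add {ι n R : Type*} [Fintype ι] [Fintype n] [CommRing R]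
    [PartialOrder R] [StarRing R] [StarOrderedRing R] [IsOrderedRing R] {c : ι → R}
    (hc : ∀ i, 0 ≤ c i) {A : ι → Matrix n n R} (hA : ∀ i, (A i).PosSemidef)
    {F : Matrix n n R} (hF : F.PosDef) : ((∑ i, c i • A i) + F).PosDef :=
  PosDef.posSemidef_add (posSemidef_sum _ fun i _ => (hA i).smul (hc i)) hF

/-- Scalability of the interference function `I(η) = 1 / (gᴴ (Σᵢ ηᵢ Aᵢ + F)⁻¹ g)`:
for every `t > 1` and `η ∈ ℝ≥0^K`, `I(t·η) < t·I(η)`. -/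
theorem stmt7 {n K : ℕ} (g : Fin n → ℂ) (hg : g ≠ 0)
    (A : Fin K → Matrix (Fin n) (Fin n) ℂ) (hA : ∀ i, (A i).PosSemidef)
    (F : Matrix (Fin n) (Fin n) ℂ) (hF : F.PosDef)
    (η : Fin K → ℝ) (hη : ∀ i, 0 ≤ η i) (t : ℝ) (ht : 1 < t) :
    1 / (star g ⬝ᵥ ((∑ i, ((t * η i : ℝ) : ℂ) • A i) + F)⁻¹.mulVec g).re
      < t * (1 / (star g ⬝ᵥ ((∑ i, (η i : ℂ) • A i) + F)⁻¹.mulVec g).re) := by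
  have ht0 : 0 < t := one_pos.trans ht
  set M := (∑ i, (η i : ℂ) • A i) + F
  set N := (∑ i, ((t * η i : ℝ) : ℂ) • A i) + F
  have hM : M.PosDef := posDef_sum_smul_add (fun i => Complex.zero_le_real.mpr (hη i)) hA hF
  have hN : N.PosDef :=
    posDef_sum_smul_add (fun i => Complex.zero_le_real.mpr (mul_nonneg ht0.le (hη i))) hA hF
  have hD : (((t - 1 : ℝ) : ℂ) • F).PosDef := hF.smul (Complex.zero_lt_real.mpr (by linarith))
  have hscale : N + ((t - 1 : ℝ) : ℂ) • F = (t : ℂ) • M := by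
    simp only [N, M, smul_add, Finset.smul_sum, smul_smul, Complex.ofReal_mul, Complex.ofReal_sub,
      Complex.ofReal_one, sub_smul, one_smul]
    abel
  have : Invertible (t : ℂ) := invertibleOfNonzero (Complex.ofReal_ne_zero.mpr ht0.ne')
  have hlt := hN.dotProduct_inv_add_mulVec_lt hD hg
  rw [hscale, Matrix.inv_smul M (t : ℂ) ((isUnit_iff_isUnit_det M).mp hM.isUnit), invOf_eq_inv,
    smul_mulVec, dotProduct_smul, smul_eq_mul, Complex.lt_def, ← Complex.ofReal_inv,
    Complex.re_ofReal_mul] at hlt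
  have hb : 0 < (star g ⬝ᵥ M⁻¹ *ᵥ g).re := by simpa using hM.inv.re_dotProduct_pos hg
  have ha : 0 < (star g ⬝ᵥ N⁻¹ *ᵥ g).re := lt_trans (by positivity) hlt.1
  rw [mul_one_div, div_lt_div_iff₀ ha hb, one_mul, ← inv_mul_lt_iff₀ ht0]
  exact hlt.1
end

section
/- Let T : ℝ_{≥0}^K → ℝ_{>0}^K be a standard interference mapping, i.e., each component T_k is positive, monotone (η ≤ η' ⟹ T(η) ≤ T(η')), and scalable (t > 1 ⟹ T(tη) < tT(η) componentwise). If T has a fixed point η*, then the fixed point is unique. -/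
/-!
Scalability at `η = 0` gives `T 0 > 0`, so by monotonicity every fixed point is strictly positive.
For two fixed points `x, y`, let `t = y j / x j` be the largest ratio, so that `y ≤ t • x`.
If `t > 1`, then `y j = T y j ≤ T (t • x) j < t * T x j = t * x j = y j`, which is absurd;
hence `y ≤ x`, and by symmetry `x = y`.
-/

open Function

section StandardInterference

variable {ι : Type*} {T : (ι → ℝ) → (ι → ℝ)}

theorem exists_le_smul_max_ratio [Finite ι] [Nonempty ι] (x y : ι → ℝ) (hx : ∀ i, 0 < x i) :
    ∃ j, y ≤ (y j / x j) • x := by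
  obtain ⟨j, hj⟩ := Finite.exists_max fun i => y i / x i
  exact ⟨j, fun i => (div_le_iff₀ (hx i)).1 (hj i)⟩

variable (hmono : MonotoneOn T (Set.Ici 0))
  (hscal : ∀ t : ℝ, 1 < t → ∀ η, 0 ≤ η → ∀ k, T (t • η) k < t * T η k)
include hmono hscal

theorem apply_pos_of_scalable {η : ι → ℝ} (hη : 0 ≤ η) (k : ι) : 0 < T η k := by
  have hT0 : 0 < T 0 k := by
    have := hscal 2 one_lt_two 0 le_rfl k
    rw [smul_zero] at this
    linarith
  exact hT0.trans_le (hmono Set.self_mem_Ici hη hη k)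

theorem le_of_isFixedPt_of_scalable [Finite ι] {x y : ι → ℝ} (hx : 0 ≤ x) (hy : 0 ≤ y)
    (hTx : IsFixedPt T x) (hTy : IsFixedPt T y) : y ≤ x := by
  cases isEmpty_or_nonempty ι
  · exact fun i => isEmptyElim i
  have hx_pos : ∀ i, 0 < x i := fun i => hTx.eq ▸ apply_pos_of_scalable hmono hscal hx i
  obtain ⟨j, hyx⟩ := exists_le_smul_max_ratio x y hx_pos
  set t := y j / x j
  rcases le_or_gt t 1 with ht | ht
  · exact fun i => (hyx i).trans (mul_le_of_le_one_left (hx_pos i).le ht)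
  · have htx : 0 ≤ t • x := smul_nonneg (zero_le_one.trans ht.le) hx
    have : y j < y j := calc
      y j = T y j := (congrFun hTy.eq j).symm
      _ ≤ T (t • x) j := hmono hy htx hyx j
      _ < t * T x j := hscal t ht x hx j
      _ = y j := by rw [hTx.eq, div_mul_cancel₀ _ (hx_pos j).ne']
    exact absurd this (lt_irrefl _)

end StandardInterference

theorem stmt10_general {K : ℕ} (T : (Fin K → ℝ) → (Fin K → ℝ))
    (hmono : ∀ η η', (∀ i, 0 ≤ η i) → (∀ i, 0 ≤ η' i) → η ≤ η' → T η ≤ T η')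
    (hscal : ∀ t : ℝ, 1 < t → ∀ η, (∀ i, 0 ≤ η i) → ∀ k, T (t • η) k < t * T η k)
    (ηs ηs' : Fin K → ℝ) (h1 : ∀ i, 0 ≤ ηs i) (h2 : ∀ i, 0 ≤ ηs' i)
    (hf1 : T ηs = ηs) (hf2 : T ηs' = ηs') : ηs = ηs' := by
  have hmonoOn : MonotoneOn T (Set.Ici 0) := fun η hη η' hη' => hmono η η' hη hη'
  exact le_antisymm (le_of_isFixedPt_of_scalable hmonoOn hscal h2 h1 hf2 hf1)
    (le_of_isFixedPt_of_scalable hmonoOn hscal h1 h2 hf1 hf2)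

/-- A standard interference mapping `T : ℝ≥0^K → ℝ>0^K` (positive, monotone, scalable)
has at most one fixed point. -/
theorem stmt10 {K : ℕ} (T : (Fin K → ℝ) → (Fin K → ℝ))
    (hpos : ∀ η, (∀ i, 0 ≤ η i) → ∀ k, 0 < T η k)
    (hmono : ∀ η η', (∀ i, 0 ≤ η i) → (∀ i, 0 ≤ η' i) → η ≤ η' → T η ≤ T η')
    (hscal : ∀ t : ℝ, 1 < t → ∀ η, (∀ i, 0 ≤ η i) → ∀ k, T (t • η) k < t * T η k)
    (ηs ηs' : Fin K → ℝ) (h1 : ∀ i, 0 ≤ ηs i) (h2 : ∀ i, 0 ≤ ηs' i)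
    (hf1 : T ηs = ηs) (hf2 : T ηs' = ηs') : ηs = ηs' :=
  stmt10_general T hmono hscal ηs ηs' h1 h2 hf1 hf2
end

section
/- In the fixed-point update of Algorithm 1, if the previous iterate satisfies 0 < η^{(j-1)}_i ≤ ρ_u for all i, then the updated coefficient η_k^{(j)} = 1/(g_k^H (C_k^{(j-1)})^{-1} g_k) satisfies η_k^{(j)} ≥ 1/(g_k^H F_k^{-1} g_k) > 0, where C_k^{(j-1)} = Σ_i η_i^{(j-1)} A_{ki} − η_k^{(j-1)} g_k g_k^H + F_k with A_{ki} ⪰ 0, A_{kk} ⪰ g_k g_k^H, F_k ≻ 0, and g_k ≠ 0. -/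
/-!
Since `Σᵢ ηᵢ Aᵢ ⪰ η_k A_k ⪰ η_k g gᴴ`, we have `F ⪯ C`. Inversion is antitone on positive
definite matrices (a C⋆-algebra fact), so `C⁻¹ ⪯ F⁻¹` and evaluating both quadratic forms at `g`
gives `0 < gᴴ C⁻¹ g ≤ gᴴ F⁻¹ g`.
-/

open Matrix ComplexOrder
open scoped MatrixOrder Matrix.Norms.L2Operator

theorem Finset.smul_le_sum_smul_of_le {κ R M : Type*} [Fintype κ] [Semiring R] [PartialOrder R]
    [AddCommMonoid M] [PartialOrder M] [IsOrderedAddMonoid M] [Module R M] [PosSMulMono R M]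
    {c : κ → R} (hc : ∀ i, 0 ≤ c i) {A : κ → M} (hA : ∀ i, 0 ≤ A i) {P : M} (k : κ)
    (hP : P ≤ A k) : c k • P ≤ ∑ i, c i • A i :=
  (smul_le_smul_of_nonneg_left hP (hc k)).trans <|
    Finset.single_le_sum (fun i _ => smul_nonneg (hc i) (hA i)) (Finset.mem_univ k)

namespace Matrix

variable {ι : Type*}

theorem PosDef.of_le {𝕜 : Type*} [RCLike 𝕜] {A B : Matrix ι ι 𝕜} (hA : A.PosDef) (hAB : A ≤ B) :
    B.PosDef := by
  simpa using hA.add_posSemidef hAB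

variable [Fintype ι]

theorem re_dotProduct_mulVec_le_of_le {𝕜 : Type*} [RCLike 𝕜] {A B : Matrix ι ι 𝕜} (hAB : A ≤ B)
    (x : ι → 𝕜) : RCLike.re (star x ⬝ᵥ A *ᵥ x) ≤ RCLike.re (star x ⬝ᵥ B *ᵥ x) := by
  have := hAB.re_dotProduct_nonneg x
  rwa [sub_mulVec, dotProduct_sub, map_sub, sub_nonneg] at this

theorem PosDef.inv_le_inv_of_le [DecidableEq ι] {A B : Matrix ι ι ℂ} (hA : A.PosDef)
    (hAB : A ≤ B) : B⁻¹ ≤ A⁻¹ := by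
  rw [nonsing_inv_eq_ringInverse, nonsing_inv_eq_ringInverse]
  exact CStarAlgebra.ringInverse_le_ringInverse hAB (isStrictlyPositive_iff_posDef.mpr hA)

end Matrix

theorem stmt19_general {n K : ℕ} (ρu : ℝ)
    (g : Fin n → ℂ) (hg : g ≠ 0)
    (A : Fin K → Matrix (Fin n) (Fin n) ℂ) (hA : ∀ i, (A i).PosSemidef)
    (k : Fin K) (hAkk : (A k - vecMulVec g (star g)).PosSemidef)
    (F : Matrix (Fin n) (Fin n) ℂ) (hF : F.PosDef)
    (η : Fin K → ℝ) (hη : ∀ i, 0 < η i ∧ η i ≤ ρu)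
    (C : Matrix (Fin n) (Fin n) ℂ)
    (hCdef : C = (∑ i, (η i : ℂ) • A i) - (η k : ℂ) • vecMulVec g (star g) + F) :
    1 / (star g ⬝ᵥ F⁻¹.mulVec g).re ≤ 1 / (star g ⬝ᵥ C⁻¹.mulVec g).re ∧
    0 < 1 / (star g ⬝ᵥ F⁻¹.mulVec g).re := by
  have hη₀ (i : Fin K) : (0 : ℂ) ≤ η i := Complex.zero_le_real.mpr (hη i).1.le
  have hFC : F ≤ C := by
    rw [hCdef]
    refine le_add_of_nonneg_left (sub_nonneg.mpr ?_)
    exact Finset.smul_le_sum_smul_of_le hη₀ (fun i => (hA i).nonneg) k hAkk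
  have hgF : 0 < (star g ⬝ᵥ F⁻¹ *ᵥ g).re := hF.inv.re_dotProduct_pos hg
  have hgC : 0 < (star g ⬝ᵥ C⁻¹ *ᵥ g).re := (hF.of_le hFC).inv.re_dotProduct_pos hg
  exact ⟨one_div_le_one_div_of_le hgC (re_dotProduct_mulVec_le_of_le (hF.inv_le_inv_of_le hFC) g),
    by positivity⟩

/-- In the fixed-point update of Algorithm 1, if `0 < η_i ≤ ρ_u` for all `i`, then the
updated coefficient `1/(g_kᴴ (C_k)⁻¹ g_k)` is bounded below by `1/(g_kᴴ F_k⁻¹ g_k) > 0`,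
where `C_k = Σᵢ ηᵢ A_{ki} − η_k g_k g_kᴴ + F_k`. -/
theorem stmt19 {n K : ℕ} (ρu : ℝ) (hρu : 0 < ρu)
    (g : Fin n → ℂ) (hg : g ≠ 0)
    (A : Fin K → Matrix (Fin n) (Fin n) ℂ) (hA : ∀ i, (A i).PosSemidef)
    (k : Fin K) (hAkk : (A k - vecMulVec g (star g)).PosSemidef)
    (F : Matrix (Fin n) (Fin n) ℂ) (hF : F.PosDef)
    (η : Fin K → ℝ) (hη : ∀ i, 0 < η i ∧ η i ≤ ρu)
    (C : Matrix (Fin n) (Fin n) ℂ)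
    (hCdef : C = (∑ i, (η i : ℂ) • A i) - (η k : ℂ) • vecMulVec g (star g) + F) :
    1 / (star g ⬝ᵥ F⁻¹.mulVec g).re ≤ 1 / (star g ⬝ᵥ C⁻¹.mulVec g).re ∧
    0 < 1 / (star g ⬝ᵥ F⁻¹.mulVec g).re :=
  stmt19_general ρu g hg A hA k hAkk F hF η hη C hCdef
end
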